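/- arXiv:2309.08155 — 2 statements merged into one kernel-verified Lean document; each statement's English description precedes it below -/
import Mathlib

section
/- For any probability ensemble E of unitaries on H, the frame potential satisfies F^{(k)}_E ≥ F^{(k)}_{Haar}, where Haar denotes the full unitary group U(H), and F^{(k)}_{Haar} equals the dimension of the commutant Comm_k(U(H)). -/
open MeasureTheory Matrix

attribute [local instance] Matrix.normedAddCommGroup Matrix.normedSpace

/-- The `k`-fold tensor power of a matrix. -/
noncomputable def tensorPow {ι : Type*} [Fintype ι] (k : ℕ) (A : Matrix ι ι ℂ) :
    Matrix (Fin k → ι) (Fin k → ι) ℂ :=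
  fun i j => ∏ a : Fin k, A (i a) (j a)

/-- The commutant `Comm_k(U(H))` of the full unitary group, as a submodule of
`End(H^{⊗k})`. -/
noncomputable def commSubmodule (ι : Type*) [Fintype ι] [DecidableEq ι] (k : ℕ) :
    Submodule ℂ (Matrix (Fin k → ι) (Fin k → ι) ℂ) where
  carrier := {M | ∀ U : Matrix.unitaryGroup ι ℂ,
    tensorPow k (U : Matrix ι ι ℂ) * M = M * tensorPow k (U : Matrix ι ι ℂ)}
  add_mem' := by
    intro a b ha hb U
    rw [mul_add, add_mul, ha U, hb U]
  zero_mem' := by intro U; simp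
  smul_mem' := by
    intro c a ha U
    rw [Matrix.mul_smul, Matrix.smul_mul, ha U]

/-!
Let `S(A) = Aᴴᵀ ⊗ₖ A`, the matrix of `X ↦ A * X * Aᴴ` acting on vectorized matrices, and for a
unitary representation `π` and a probability measure `ν` let `T_ν = ∫ S(π g) dν`. Since
`|tr(A Bᴴ)|² = tr(S(A) S(B)ᴴ)`, the frame potential is `F_ν = tr(T_ν T_νᴴ)`. Left invariance of
the Haar measure `μ` gives `S(π g) T_μ = T_μ`, hence `T_μᴴ T_ν = T_μᴴ` for every `ν`. So `T_μ` is
a projection onto the vectorized commutant, `F_μ = tr T_μ` is its dimension, and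
`F_ν - F_μ = tr((T_ν - T_μ)ᴴ (T_ν - T_μ)) ≥ 0`. The `k`-th frame potential of an ensemble of
unitaries is the frame potential of `U ↦ U^{⊗k}`, because
`|tr(U Vᴴ)|^{2k} = |tr(U^{⊗k} (V^{⊗k})ᴴ)|²`.
-/

open scoped Kronecker ComplexOrder

namespace Matrix

def vecLinearEquiv {R m p : Type*} [Semiring R] : Matrix m p R ≃ₗ[R] (p × m → R) where
  toFun := vec
  invFun v := of fun i j => v (j, i)
  map_add' := vec_add
  map_smul' := vec_smul
  left_inv _ := rfl
  right_inv _ := rfl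

@[simp]
theorem vecLinearEquiv_apply {R m p : Type*} [Semiring R] (A : Matrix m p R) :
    vecLinearEquiv A = vec A :=
  rfl

theorem integral_linearMap {X m p : Type*} [MeasurableSpace X] {ν : Measure X}
    [Fintype m] [Fintype p] [DecidableEq m] [DecidableEq p] {F : X → Matrix m p ℂ}
    (hF : ∀ i j, Integrable (fun x => F x i j) ν) (L : Matrix m p ℂ →ₗ[ℂ] ℂ) :
    ∫ x, L (F x) ∂ν = L (of fun i j => ∫ x, F x i j ∂ν) := by
  have hL (M : Matrix m p ℂ) : L M = ∑ i, ∑ j, M i j * L (single i j 1) := by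
    conv_lhs => rw [matrix_eq_sum_single M]
    simp only [map_sum]
    refine Finset.sum_congr rfl fun i _ => Finset.sum_congr rfl fun j _ => ?_
    rw [← smul_eq_mul, ← map_smul, smul_single, smul_eq_mul, mul_one]
  rw [show (fun x => L (F x)) = _ from funext fun x => hL (F x), hL]
  simp only [of_apply]
  rw [integral_finsetSum _ fun i _ => integrable_finsetSum _ fun j _ => (hF i j).mul_const _]
  refine Finset.sum_congr rfl fun i _ => ?_
  rw [integral_finsetSum _ fun j _ => (hF i j).mul_const _]
  exact Finset.sum_congr rfl fun j _ => integral_mul_const _ _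

variable {n : Type*}

theorem mul_mul_conjTranspose_eq_self_iff [Fintype n] [DecidableEq n] {U : Matrix n n ℂ}
    (hU : U ∈ unitaryGroup n ℂ) {X : Matrix n n ℂ} : U * X * Uᴴ = X ↔ U * X = X * U := by
  rw [← star_eq_conjTranspose]
  constructor
  · intro h
    calc U * X = U * X * (star U * U) := by rw [Unitary.star_mul_self_of_mem hU, mul_one]
      _ = X * U := by rw [← mul_assoc, h]
  · intro h
    rw [h, mul_assoc, Unitary.mul_star_self_of_mem hU, mul_one]

theorem trace_mul_conjTranspose_eq_star [Fintype n] (A B : Matrix n n ℂ) :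
    (A * Bᴴ).trace = star (B * Aᴴ).trace := by
  rw [← trace_conjTranspose, conjTranspose_mul, conjTranspose_conjTranspose]

theorem trace_mul_conjTranspose_le_of_conjTranspose_mul_eq [Fintype n] {A B : Matrix n n ℂ}
    (h : Bᴴ * A = Bᴴ * B) : (B * Bᴴ).trace ≤ (A * Aᴴ).trace := by
  have h' : Aᴴ * B = Bᴴ * B := by
    rw [← conjTranspose_conjTranspose B, ← conjTranspose_mul, h, conjTranspose_mul,
      conjTranspose_conjTranspose]
  have hsq : (A - B)ᴴ * (A - B) = Aᴴ * A - Bᴴ * B := by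
    rw [conjTranspose_sub, sub_mul, mul_sub, mul_sub, h', h]
    abel
  rw [← sub_nonneg, trace_mul_comm A, trace_mul_comm B, ← trace_sub, ← hsq]
  exact (posSemidef_conjTranspose_mul_self _).trace_nonneg

def superop (A : Matrix n n ℂ) : Matrix (n × n) (n × n) ℂ := Aᴴᵀ ⊗ₖ A

theorem superop_mul [Fintype n] (A B : Matrix n n ℂ) :
    superop (A * B) = superop A * superop B := by
  rw [superop, superop, superop, ← mul_kronecker_mul, conjTranspose_mul, transpose_mul]

theorem superop_one [DecidableEq n] : superop (1 : Matrix n n ℂ) = 1 := by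
  rw [superop, conjTranspose_one, transpose_one, one_kronecker_one]

theorem superop_conjTranspose (A : Matrix n n ℂ) : superop Aᴴ = (superop A)ᴴ := by
  rw [superop, superop, conjTranspose_kronecker, conjTranspose_conjTranspose]
  congr 1
  ext
  simp

theorem superop_mem_unitaryGroup [Fintype n] [DecidableEq n] {U : Matrix n n ℂ}
    (hU : U ∈ unitaryGroup n ℂ) : superop U ∈ unitaryGroup (n × n) ℂ := by
  rw [mem_unitaryGroup_iff, star_eq_conjTranspose, ← superop_conjTranspose, ← superop_mul,
    ← star_eq_conjTranspose, mem_unitaryGroup_iff.mp hU, superop_one]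

theorem trace_superop [Fintype n] (A : Matrix n n ℂ) :
    (superop A).trace = (‖A.trace‖ ^ 2 : ℝ) := by
  rw [superop, trace_kronecker, trace_transpose, trace_conjTranspose, Complex.ofReal_pow,
    ← Complex.conj_mul']
  rfl

theorem superop_mulVec_vec [Fintype n] (A X : Matrix n n ℂ) :
    superop A *ᵥ vec X = vec (A * X * Aᴴ) := by
  rw [superop, kronecker_mulVec_vec, transpose_transpose]

theorem superop_mulVec_vec_eq_self_iff [Fintype n] [DecidableEq n] {U : Matrix n n ℂ}
    (hU : U ∈ unitaryGroup n ℂ) {X : Matrix n n ℂ} :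
    superop U *ᵥ vec X = vec X ↔ U * X = X * U := by
  rw [superop_mulVec_vec, vec_inj, mul_mul_conjTranspose_eq_self_iff hU]

end Matrix

namespace UnitaryRepresentation

section Definitions

variable {G : Type*} [Monoid G] {n : Type*} [Fintype n] [DecidableEq n]

def commutant (π : G →* unitaryGroup n ℂ) : Submodule ℂ (Matrix n n ℂ) :=
  Subalgebra.toSubmodule (Subalgebra.centralizer ℂ (Set.range fun g => (π g : Matrix n n ℂ)))

theorem mem_commutant {π : G →* unitaryGroup n ℂ} {X : Matrix n n ℂ} :
    X ∈ commutant π ↔ ∀ g, (π g : Matrix n n ℂ) * X = X * π g := by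
  simp [commutant, Subalgebra.mem_centralizer_iff]

variable [MeasurableSpace G]

noncomputable def momentOp (π : G →* unitaryGroup n ℂ) (ν : Measure G) :
    Matrix (n × n) (n × n) ℂ :=
  of fun i j => ∫ g, superop (π g : Matrix n n ℂ) i j ∂ν

noncomputable def framePotential (π : G →* unitaryGroup n ℂ) (ν : Measure G) : ℝ :=
  ∫ g, ∫ h, ‖((π g : Matrix n n ℂ) * (π h : Matrix n n ℂ)ᴴ).trace‖ ^ 2 ∂ν ∂ν

end Definitions

variable {G : Type*} [Group G] [MeasurableSpace G] [TopologicalSpace G] [OpensMeasurableSpace G]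
  {n : Type*} [Fintype n] [DecidableEq n] {π : G →* unitaryGroup n ℂ}

theorem integrable_superop_apply (hπ : Continuous π) (ν : Measure G) [IsFiniteMeasure ν]
    (i j : n × n) : Integrable (fun g => superop (π g : Matrix n n ℂ) i j) ν := by
  refine Integrable.of_bound ?_ 1 (ae_of_all _ fun g =>
    entry_norm_bound_of_unitary (superop_mem_unitaryGroup (π g).2) i j)
  have hmat : Continuous fun g => (π g : Matrix n n ℂ) := continuous_subtype_val.comp hπ
  have hentry (a b : n) : Continuous fun g => (π g : Matrix n n ℂ) a b :=
    (continuous_apply_apply a b).comp hmat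
  exact ((hentry _ _).star.mul (hentry _ _)).aestronglyMeasurable

theorem integral_linearMap_superop (hπ : Continuous π) (ν : Measure G) [IsFiniteMeasure ν]
    (L : Matrix (n × n) (n × n) ℂ →ₗ[ℂ] ℂ) :
    ∫ g, L (superop (π g : Matrix n n ℂ)) ∂ν = L (momentOp π ν) :=
  integral_linearMap (integrable_superop_apply hπ ν) L

theorem trace_momentOp_mul (hπ : Continuous π) (ν : Measure G) [IsFiniteMeasure ν]
    (B : Matrix (n × n) (n × n) ℂ) :
    (momentOp π ν * B).trace = ∫ g, (superop (π g : Matrix n n ℂ) * B).trace ∂ν :=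
  (integral_linearMap_superop hπ ν (traceLinearMap _ ℂ ℂ ∘ₗ LinearMap.mulRight ℂ B)).symm

theorem ofReal_framePotential (hπ : Continuous π) (ν : Measure G) [IsFiniteMeasure ν] :
    (framePotential π ν : ℂ) = (momentOp π ν * (momentOp π ν)ᴴ).trace := by
  have hpoint (g h : G) :
      ((‖((π g : Matrix n n ℂ) * (π h : Matrix n n ℂ)ᴴ).trace‖ ^ 2 : ℝ) : ℂ) =
        (superop (π g : Matrix n n ℂ) * (superop (π h : Matrix n n ℂ))ᴴ).trace := by
    rw [← trace_superop, superop_mul, superop_conjTranspose]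
  -- conjugating moves the integration variable into the left factor, where `trace_momentOp_mul`
  -- applies
  have hinner (g : G) :
      ∫ h, (superop (π g : Matrix n n ℂ) * (superop (π h : Matrix n n ℂ))ᴴ).trace ∂ν =
        (superop (π g : Matrix n n ℂ) * (momentOp π ν)ᴴ).trace := by
    calc ∫ h, (superop (π g : Matrix n n ℂ) * (superop (π h : Matrix n n ℂ))ᴴ).trace ∂ν
        = ∫ h, star (superop (π h : Matrix n n ℂ) * (superop (π g : Matrix n n ℂ))ᴴ).trace ∂ν := by
          congr 1 with h
          exact trace_mul_conjTranspose_eq_star _ _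
      _ = star (momentOp π ν * (superop (π g : Matrix n n ℂ))ᴴ).trace := by
          rw [trace_momentOp_mul hπ]
          exact integral_conj
      _ = (superop (π g : Matrix n n ℂ) * (momentOp π ν)ᴴ).trace :=
          (trace_mul_conjTranspose_eq_star _ _).symm
  rw [framePotential, ← integral_complex_ofReal]
  simp only [← integral_complex_ofReal, hpoint, hinner]
  exact (trace_momentOp_mul hπ ν _).symm

section Haar

variable [MeasurableMul G] (μ : Measure G) [IsProbabilityMeasure μ] [μ.IsMulLeftInvariant]

theorem superop_mul_momentOp (hπ : Continuous π) (w : G) :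
    superop (π w : Matrix n n ℂ) * momentOp π μ = momentOp π μ := by
  ext i j
  have h := integral_linearMap_superop hπ μ
    (entryLinearMap ℂ ℂ i j ∘ₗ LinearMap.mulLeft ℂ (superop (π w : Matrix n n ℂ)))
  simp only [LinearMap.comp_apply, LinearMap.mulLeft_apply, entryLinearMap_apply,
    ← superop_mul, ← Submonoid.coe_mul, ← map_mul] at h
  rw [← h]
  exact integral_mul_left_eq_self (fun g => superop (π g : Matrix n n ℂ) i j) w

theorem conjTranspose_momentOp_mul_superop (hπ : Continuous π) (w : G) :
    (momentOp π μ)ᴴ * superop (π w : Matrix n n ℂ) = (momentOp π μ)ᴴ := by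
  have hinv : (π w : Matrix n n ℂ)ᴴ = (π w⁻¹ : Matrix n n ℂ) := by
    rw [map_inv, ← Unitary.star_eq_inv, Unitary.coe_star, star_eq_conjTranspose]
  calc (momentOp π μ)ᴴ * superop (π w : Matrix n n ℂ)
      = (superop (π w : Matrix n n ℂ)ᴴ * momentOp π μ)ᴴ := by
        rw [conjTranspose_mul, superop_conjTranspose, conjTranspose_conjTranspose]
    _ = (momentOp π μ)ᴴ := by rw [hinv, superop_mul_momentOp μ hπ]

theorem conjTranspose_momentOp_mul_momentOp (hπ : Continuous π) (ν : Measure G)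
    [IsProbabilityMeasure ν] : (momentOp π μ)ᴴ * momentOp π ν = (momentOp π μ)ᴴ := by
  ext i j
  have h := integral_linearMap_superop hπ ν
    (entryLinearMap ℂ ℂ i j ∘ₗ LinearMap.mulLeft ℂ (momentOp π μ)ᴴ)
  simp only [LinearMap.comp_apply, LinearMap.mulLeft_apply, entryLinearMap_apply,
    conjTranspose_momentOp_mul_superop μ hπ] at h
  rw [← h]
  simp

theorem isProj_toLin'_momentOp (hπ : Continuous π) :
    LinearMap.IsProj ((commutant π).map (vecLinearEquiv : Matrix n n ℂ ≃ₗ[ℂ] _).toLinearMap)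
      (toLin' (momentOp π μ)) where
  map_mem x := by
    obtain ⟨Y, hY⟩ := vec_bijective.2 (momentOp π μ *ᵥ x)
    refine Submodule.mem_map.2 ⟨Y, mem_commutant.2 fun g => ?_, by simpa using hY⟩
    rw [← superop_mulVec_vec_eq_self_iff (π g).2, hY, mulVec_mulVec, superop_mul_momentOp μ hπ]
  map_id x hx := by
    obtain ⟨X, hX, rfl⟩ := Submodule.mem_map.1 hx
    have hfix (g : G) : superop (π g : Matrix n n ℂ) *ᵥ vec X = vec X :=
      (superop_mulVec_vec_eq_self_iff (π g).2).2 (mem_commutant.1 hX g)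
    ext i
    have h := integral_linearMap_superop hπ μ (LinearMap.proj i ∘ₗ (mulVecBilin ℂ ℂ).flip (vec X))
    simp only [LinearMap.comp_apply, LinearMap.flip_apply, mulVecBilin_apply,
      LinearMap.proj_apply, hfix, integral_const, probReal_univ, one_smul] at h
    simpa using h.symm

theorem trace_momentOp (hπ : Continuous π) :
    (momentOp π μ).trace = Module.finrank ℂ (commutant π) := by
  rw [← trace_toLin'_eq, (isProj_toLin'_momentOp μ hπ).trace, LinearEquiv.finrank_map_eq]

theorem framePotential_eq_finrank_commutant (hπ : Continuous π) :
    framePotential π μ = Module.finrank ℂ (commutant π) := by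
  rw [← Complex.ofReal_inj, ofReal_framePotential hπ, trace_mul_comm,
    conjTranspose_momentOp_mul_momentOp μ hπ μ, trace_conjTranspose, trace_momentOp μ hπ]
  simp

theorem framePotential_le (hπ : Continuous π) (ν : Measure G) [IsProbabilityMeasure ν] :
    framePotential π μ ≤ framePotential π ν := by
  rw [← Complex.real_le_real, ofReal_framePotential hπ, ofReal_framePotential hπ]
  refine trace_mul_conjTranspose_le_of_conjTranspose_mul_eq ?_
  rw [conjTranspose_momentOp_mul_momentOp μ hπ ν, conjTranspose_momentOp_mul_momentOp μ hπ μ]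

end Haar

end UnitaryRepresentation

section TensorPower

variable {ι : Type*} [Fintype ι]

theorem tensorPow_mul (k : ℕ) (A B : Matrix ι ι ℂ) :
    tensorPow k (A * B) = tensorPow k A * tensorPow k B := by
  ext i j
  simp only [tensorPow, mul_apply]
  rw [Fintype.prod_sum fun a x => A (i a) x * B x (j a)]
  exact Finset.sum_congr rfl fun x _ => Finset.prod_mul_distrib

theorem tensorPow_conjTranspose (k : ℕ) (A : Matrix ι ι ℂ) :
    tensorPow k Aᴴ = (tensorPow k A)ᴴ := by
  ext i j
  simp only [tensorPow, conjTranspose_apply, star_prod]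

theorem tensorPow_one [DecidableEq ι] (k : ℕ) : tensorPow k (1 : Matrix ι ι ℂ) = 1 := by
  ext i j
  by_cases h : i = j
  · subst h
    simp [tensorPow]
  · obtain ⟨a, ha⟩ := Function.ne_iff.mp h
    rw [one_apply_ne h]
    exact Finset.prod_eq_zero (Finset.mem_univ a) (one_apply_ne ha)

theorem trace_tensorPow (k : ℕ) (A : Matrix ι ι ℂ) : (tensorPow k A).trace = A.trace ^ k := by
  simp only [trace, diag, tensorPow]
  rw [← Fintype.prod_sum fun (_ : Fin k) (x : ι) => A x x]
  simp

theorem tensorPow_mem_unitaryGroup [DecidableEq ι] (k : ℕ) {U : Matrix ι ι ℂ}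
    (hU : U ∈ unitaryGroup ι ℂ) : tensorPow k U ∈ unitaryGroup (Fin k → ι) ℂ := by
  rw [mem_unitaryGroup_iff, star_eq_conjTranspose, ← tensorPow_conjTranspose, ← tensorPow_mul,
    ← star_eq_conjTranspose, mem_unitaryGroup_iff.mp hU, tensorPow_one]

theorem norm_trace_mul_conjTranspose_pow (k : ℕ) (U V : Matrix ι ι ℂ) :
    ‖(U * Vᴴ).trace‖ ^ (2 * k) = ‖(tensorPow k U * (tensorPow k V)ᴴ).trace‖ ^ 2 := by
  rw [← tensorPow_conjTranspose, ← tensorPow_mul, trace_tensorPow, norm_pow, ← pow_mul, mul_comm]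

variable [DecidableEq ι]

noncomputable def tensorPowHom (k : ℕ) : unitaryGroup ι ℂ →* unitaryGroup (Fin k → ι) ℂ where
  toFun U := ⟨tensorPow k U, tensorPow_mem_unitaryGroup k U.2⟩
  map_one' := Subtype.ext (tensorPow_one k)
  map_mul' U V := Subtype.ext (tensorPow_mul k (U : Matrix ι ι ℂ) V)

@[simp]
theorem coe_tensorPowHom_apply (k : ℕ) (U : unitaryGroup ι ℂ) :
    (tensorPowHom k U : Matrix (Fin k → ι) (Fin k → ι) ℂ) = tensorPow k U :=
  rfl

theorem continuous_tensorPowHom (k : ℕ) : Continuous (tensorPowHom (ι := ι) k) := by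
  refine Continuous.subtype_mk (continuous_pi fun i => continuous_pi fun j => ?_) _
  refine continuous_finsetProd _ fun a _ => ?_
  exact (continuous_apply_apply (i a) (j a)).comp continuous_subtype_val

theorem commSubmodule_eq_commutant (k : ℕ) :
    commSubmodule ι k = UnitaryRepresentation.commutant (tensorPowHom k) := by
  ext X
  rw [UnitaryRepresentation.mem_commutant]
  simp [commSubmodule]

theorem framePotential_tensorPowHom [MeasurableSpace (unitaryGroup ι ℂ)] (k : ℕ)
    (ν : Measure (unitaryGroup ι ℂ)) :
    UnitaryRepresentation.framePotential (tensorPowHom k) ν =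
      ∫ U, ∫ V, ‖((U : Matrix ι ι ℂ) * (V : Matrix ι ι ℂ)ᴴ).trace‖ ^ (2 * k) ∂ν ∂ν := by
  simp only [UnitaryRepresentation.framePotential, coe_tensorPowHom_apply,
    norm_trace_mul_conjTranspose_pow k]

end TensorPower

open UnitaryRepresentation in
/-- the frame potential of any probability ensemble of unitaries is
at least the Haar frame potential, and the Haar frame potential equals the
dimension of the commutant `Comm_k(U(H))`. -/
theorem framePotential_ge_haar {ι : Type*} [Fintype ι] [DecidableEq ι]
    [MeasurableSpace (Matrix.unitaryGroup ι ℂ)] [BorelSpace (Matrix.unitaryGroup ι ℂ)]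
    (μ : Measure (Matrix.unitaryGroup ι ℂ)) [μ.IsHaarMeasure] [IsProbabilityMeasure μ]
    (ν : Measure (Matrix.unitaryGroup ι ℂ)) [IsProbabilityMeasure ν] (k : ℕ)
    (FE FHaar : ℝ)
    (hFE : FE = ∫ U, ∫ V,
        ‖((U : Matrix ι ι ℂ) * (V : Matrix ι ι ℂ)ᴴ).trace‖ ^ (2 * k) ∂ν ∂ν)
    (hFHaar : FHaar = ∫ U, ∫ V,
        ‖((U : Matrix ι ι ℂ) * (V : Matrix ι ι ℂ)ᴴ).trace‖ ^ (2 * k) ∂μ ∂μ) :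
    FHaar = Module.finrank ℂ (commSubmodule ι k) ∧ FE ≥ FHaar := by
  rw [hFE, hFHaar, ← framePotential_tensorPowHom, ← framePotential_tensorPowHom,
    commSubmodule_eq_commutant]
  exact ⟨framePotential_eq_finrank_commutant μ (continuous_tensorPowHom k),
    framePotential_le μ (continuous_tensorPowHom k) ν⟩
end

section
/- Let τ be a Hermitian involution on H. Then the averaged fourth-moment operator (1/2π)∫_0^{2π} (e^{-itτ})^{⊗2} ⊗ (e^{itτ})^{⊗2} dt equals (1/8)(3·IIII + 3·ττττ + IτIτ + IττI + τIIτ + τIτI − IIττ − ττII), where concatenation denotes the fourfold tensor product with I or τ in the indicated slots. -/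
/-! Since `τ² = 1`, `exp (z • τ) = exp z • P + exp (-z) • Q` with `P, Q = (1 ± τ) / 2` the spectral
projections of `τ`. Expanding the fourfold tensor product, a word in `P, Q` picks up the phase
`exp (k i t)`, where `k` is twice the number of `P`s in the last two factors minus twice the number
in the first two. Averaging over a period kills every word with `k ≠ 0`; the six remaining words,
rewritten in terms of `1` and `τ`, give the stated combination. -/

open Matrix Kronecker MeasureTheory

attribute [local instance] Matrix.normedAddCommGroup Matrix.normedSpace

/-- Fourfold Kronecker (tensor) product. -/
noncomputable def kron4 {ι : Type*} [Fintype ι] (X Y Z W : Matrix ι ι ℂ) :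
    Matrix ((ι × ι) × ι × ι) ((ι × ι) × ι × ι) ℂ :=
  (X ⊗ₖ Y) ⊗ₖ (Z ⊗ₖ W)

open Complex

section Involution

variable {A : Type*} [Ring A] [Algebra ℂ A] [TopologicalSpace A] [IsTopologicalRing A]
  [ContinuousSMul ℂ A] [T2Space A] {a : A}

theorem exp_smul_eq_cosh_add_sinh_of_mul_self_eq_one (ha : a * a = 1) (z : ℂ) :
    NormedSpace.exp (z • a) = cosh z • (1 : A) + sinh z • a := by
  have hpow : ∀ k : ℕ, a ^ (2 * k) = 1 := fun k => by rw [pow_mul, sq, ha, one_pow]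
  rw [NormedSpace.exp_eq_tsum ℂ]
  refine HasSum.tsum_eq (HasSum.even_add_odd ?_ ?_)
  · convert (hasSum_cosh z).smul_const (1 : A) using 2 with k
    rw [smul_pow, hpow, smul_smul, div_eq_inv_mul]
  · convert (hasSum_sinh z).smul_const a using 2 with k
    rw [smul_pow, pow_succ a, hpow, one_mul, smul_smul, pow_succ z, div_eq_inv_mul]

theorem exp_smul_of_mul_self_eq_one (ha : a * a = 1) (z : ℂ) :
    NormedSpace.exp (z • a) =
      exp z • ((2⁻¹ : ℂ) • (1 + a)) + exp (-z) • ((2⁻¹ : ℂ) • (1 - a)) := by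
  rw [exp_smul_eq_cosh_add_sinh_of_mul_self_eq_one ha, cosh, sinh]
  module

end Involution

section Averaging

variable {E : Type*} [NormedAddCommGroup E] [NormedSpace ℂ E] [CompleteSpace E]

theorem integral_exp_int_mul_I_smul {n : ℤ} (hn : n ≠ 0) (M : E) :
    ∫ t in (0 : ℝ)..(2 * Real.pi), exp (n * I * t) • M = 0 := by
  have hnI : (n : ℂ) * I ≠ 0 := mul_ne_zero (Int.cast_ne_zero.mpr hn) I_ne_zero
  have hper : exp (n * I * (2 * Real.pi : ℝ)) = 1 := by
    rw [← exp_int_mul_two_pi_mul_I n]; push_cast; ring_nf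
  rw [intervalIntegral.integral_smul_const, integral_exp_mul_complex hnI, hper]
  simp

end Averaging

section Kron4

variable {ι : Type*} [Fintype ι]

/-- The words in `P, Q` with as many `P`s among the first two factors as among the last two. -/
noncomputable def kron4Balanced (P Q : Matrix ι ι ℂ) :
    Matrix ((ι × ι) × ι × ι) ((ι × ι) × ι × ι) ℂ :=
  kron4 P P P P + kron4 Q Q Q Q + kron4 P Q P Q + kron4 P Q Q P + kron4 Q P P Q + kron4 Q P Q P

theorem kron4_phase_expansion (P Q : Matrix ι ι ℂ) (t : ℝ) :
    kron4 (exp (-(I * t)) • P + exp (I * t) • Q) (exp (-(I * t)) • P + exp (I * t) • Q)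
        (exp (I * t) • P + exp (-(I * t)) • Q) (exp (I * t) • P + exp (-(I * t)) • Q) =
      kron4Balanced P Q
        + exp ((-4 : ℤ) * I * t) • kron4 P P Q Q
        + exp ((4 : ℤ) * I * t) • kron4 Q Q P P
        + exp ((-2 : ℤ) * I * t) •
            (kron4 P P P Q + kron4 P P Q P + kron4 P Q Q Q + kron4 Q P Q Q)
        + exp ((2 : ℤ) * I * t) •
            (kron4 Q Q Q P + kron4 Q Q P Q + kron4 Q P P P + kron4 P Q P P) := by
  simp only [kron4Balanced, kron4, add_kronecker, kronecker_add, smul_kronecker, kronecker_smul,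
    smul_add, smul_smul, ← exp_add]
  push_cast
  ring_nf
  simp only [exp_zero, one_smul]
  module

variable [DecidableEq ι]

theorem kron4Balanced_projections (τ : Matrix ι ι ℂ) :
    kron4Balanced ((2⁻¹ : ℂ) • (1 + τ)) ((2⁻¹ : ℂ) • (1 - τ)) =
      (1 / 8 : ℂ) •
        ((3 : ℂ) • kron4 1 1 1 1 + (3 : ℂ) • kron4 τ τ τ τ +
          kron4 1 τ 1 τ + kron4 1 τ τ 1 + kron4 τ 1 1 τ + kron4 τ 1 τ 1 -
          kron4 1 1 τ τ - kron4 τ τ 1 1) := by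
  simp only [kron4Balanced, kron4, sub_eq_add_neg, ← neg_one_smul ℂ τ, add_kronecker,
    kronecker_add, smul_kronecker, kronecker_smul, smul_smul]
  module

end Kron4

theorem averaged_fourth_moment_general {ι : Type*} [Fintype ι] [DecidableEq ι]
    (τ : Matrix ι ι ℂ) (hinv : τ * τ = 1) :
    (1 / (2 * Real.pi) : ℝ) •
      (∫ t in (0 : ℝ)..(2 * Real.pi),
        kron4 (NormedSpace.exp ((-(Complex.I * t)) • τ))
              (NormedSpace.exp ((-(Complex.I * t)) • τ))
              (NormedSpace.exp ((Complex.I * t) • τ))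
              (NormedSpace.exp ((Complex.I * t) • τ))) =
    (1 / 8 : ℂ) •
      ((3 : ℂ) • kron4 1 1 1 1 + (3 : ℂ) • kron4 τ τ τ τ +
        kron4 1 τ 1 τ + kron4 1 τ τ 1 + kron4 τ 1 1 τ + kron4 τ 1 τ 1 -
        kron4 1 1 τ τ - kron4 τ τ 1 1) := by
  simp only [exp_smul_of_mul_self_eq_one hinv, neg_neg, kron4_phase_expansion]
  simp (disch := first | decide | exact (Continuous.intervalIntegrable (by fun_prop) _ _)) only
    [intervalIntegral.integral_add, integral_exp_int_mul_I_smul, add_zero,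
      intervalIntegral.integral_const, smul_smul]
  rw [sub_zero, one_div_mul_cancel Real.two_pi_pos.ne', one_smul, kron4Balanced_projections]

/-- for a Hermitian involution `τ`, the averaged fourth-moment
operator `(1/2π)∫₀^{2π} (e^{-itτ})^{⊗2} ⊗ (e^{itτ})^{⊗2} dt` equals
`(1/8)(3·IIII + 3·ττττ + IτIτ + IττI + τIIτ + τIτI − IIττ − ττII)`. -/
theorem averaged_fourth_moment {ι : Type*} [Fintype ι] [DecidableEq ι]
    (τ : Matrix ι ι ℂ) (hherm : τᴴ = τ) (hinv : τ * τ = 1) :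
    (1 / (2 * Real.pi) : ℝ) •
      (∫ t in (0 : ℝ)..(2 * Real.pi),
        kron4 (NormedSpace.exp ((-(Complex.I * t)) • τ))
              (NormedSpace.exp ((-(Complex.I * t)) • τ))
              (NormedSpace.exp ((Complex.I * t) • τ))
              (NormedSpace.exp ((Complex.I * t) • τ))) =
    (1 / 8 : ℂ) •
      ((3 : ℂ) • kron4 1 1 1 1 + (3 : ℂ) • kron4 τ τ τ τ +
        kron4 1 τ 1 τ + kron4 1 τ τ 1 + kron4 τ 1 1 τ + kron4 τ 1 τ 1 -
        kron4 1 1 τ τ - kron4 τ τ 1 1) :=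
  averaged_fourth_moment_general τ hinv
end
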